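/- Let n ≥ 1 and (t_j)_{j≥-n} be nonnegative with t_{-n} > 0, Σ_{k≥0} t_{k-n} = 1, Σ_{k≥1} k t_{k-n} < n, and the derivative of z ↦ τ(z)^{1/n} increasing on (0,1), where τ(z) = Σ_{k≥0} t_{k-n} z^k. Then every positive solution (x_k) of x_k = Σ_{j=-n}^{k} t_j x_{k-j} satisfies limsup_{k→∞} x_k < ∞. -/

import Mathlib

/-!
Write `τ z = ∑ t (k - n) z ^ k` and `χ z = ∑ x k z ^ k`. Since the derivative of `τ ^ (1/n)`
increases and, by `τ 1 = 1`, is at most `τ'(1) / n < 1`, the mean value theorem gives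
`τ z ^ (1/n) ≥ 1 - (1 - z) τ'(1) / n > z`, i.e. `τ z > z ^ n` on `(0, 1)`.

Multiplying the recurrence by `z ^ (k + n)` and summing gives
`(τ z - z ^ n) χ z ≤ τ z ∑_{k<n} x k z ^ k` wherever `χ` converges. A truncated form of the same
computation makes the partial sums of a divergent `χ z` grow geometrically, fast enough to
diverge also at a slightly smaller point; hence the infimum of the points of divergence cannot
lie in `(0, 1)`, and `χ` converges there. As `τ z - z ^ n ≥ (1 - z)(n - τ'(1)) / 2` near `1`,
`(1 - z) χ z` stays bounded, which for nonnegative `x` means `∑_{k<N} x k = O(N)`.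

Finally, by the recurrence every running maximum of `x` is matched or exceeded within the next
`n` indices, so every block of `n` consecutive indices after `k` contributes at least `x k`, and
`L x k ≤ ∑_{i < k + L n} x i = O(k + L n)` bounds `x k` uniformly.
-/

open Filter Set Finset Topology

lemma MonotoneOn.le_of_tendsto_nhdsLT {g u : ℝ → ℝ} {a b l : ℝ} (hg : MonotoneOn g (Ioo a b))
    (hgu : ∀ x ∈ Ioo a b, g x ≤ u x) (hu : Tendsto u (𝓝[<] b) (𝓝 l)) {w : ℝ}
    (hw : w ∈ Ioo a b) : g w ≤ l := by
  refine ge_of_tendsto hu ?_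
  filter_upwards [Ioo_mem_nhdsLT hw.2] with x hx
  have hx' : x ∈ Ioo a b := ⟨hw.1.trans hx.1, hx.2⟩
  exact (hg hw hx' hx.1.le).trans (hgu x hx')

lemma sub_le_mul_sub_of_deriv_le_of_tendsto {f : ℝ → ℝ} {a b C l : ℝ}
    (hf : ∀ x ∈ Ioo a b, DifferentiableAt ℝ f x) (hC : ∀ x ∈ Ioo a b, deriv f x ≤ C)
    (hl : Tendsto f (𝓝[<] b) (𝓝 l)) {x : ℝ} (hx : x ∈ Ioo a b) : l - f x ≤ C * (b - x) := by
  have hmvt : ∀ y ∈ Ioo x b, f y - f x ≤ C * (y - x) := fun y hy =>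
    (convex_Ioo a b).image_sub_le_mul_sub_of_deriv_le
      (fun y hy => (hf y hy).continuousAt.continuousWithinAt)
      (fun y hy => (hf y (interior_subset hy)).differentiableWithinAt)
      (fun y hy => hC y (interior_subset hy)) x hx y ⟨hx.1.trans hy.1, hy.2⟩ hy.1.le
  have hlin : Tendsto (fun y => C * (y - x)) (𝓝[<] b) (𝓝 (C * (b - x))) :=
    ((continuous_const.mul (continuous_id.sub continuous_const)).tendsto b).mono_left
      nhdsWithin_le_nhds
  exact le_of_tendsto_of_tendsto (hl.sub_const _) hlin
    (eventually_of_mem (Ioo_mem_nhdsLT hx.2) hmvt)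

lemma exists_pow_mul_le_of_mul_sub_le {Y : ℕ → ℝ} {t c : ℝ} {d : ℕ} (ht : 1 < t) (hc : 0 ≤ c)
    (hY : Tendsto Y atTop atTop) (h : ∀ K, t * (Y K - c) ≤ Y (K + d)) :
    ∃ K₀, ∃ a > 0, ∀ l : ℕ, t ^ l * a ≤ Y (K₀ + l * d) := by
  -- `Y - c'` with `c' (t - 1) = t c` grows at least geometrically with ratio `t`
  set c' := t * c / (t - 1)
  have hc' : c' * (t - 1) = t * c := div_mul_cancel₀ _ (by linarith)
  have hc'0 : 0 ≤ c' := div_nonneg (by positivity) (by linarith)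
  have hstep : ∀ K, t * (Y K - c') ≤ Y (K + d) - c' := fun K => by linarith [h K]
  obtain ⟨K₀, hK₀⟩ := (hY.eventually_gt_atTop c').exists
  refine ⟨K₀, Y K₀ - c', by linarith, fun l => ?_⟩
  suffices t ^ l * (Y K₀ - c') ≤ Y (K₀ + l * d) - c' by linarith
  induction l with
  | zero => simp
  | succ l ih =>
    calc t ^ (l + 1) * (Y K₀ - c') = t * (t ^ l * (Y K₀ - c')) := by ring
      _ ≤ t * (Y (K₀ + l * d) - c') := mul_le_mul_of_nonneg_left ih (by linarith)
      _ ≤ Y (K₀ + (l + 1) * d) - c' := by rw [add_mul, one_mul, ← add_assoc]; exact hstep _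

lemma div_pow_mul_sum_range_le {x : ℕ → ℝ} (hx : ∀ k, 0 ≤ x k) {w z : ℝ} (hw : 0 < w)
    (hwz : w ≤ z) (N : ℕ) :
    (w / z) ^ N * ∑ i ∈ range N, x i * z ^ i ≤ ∑ i ∈ range N, x i * w ^ i := by
  have hz : 0 < z := hw.trans_le hwz
  rw [Finset.mul_sum]
  refine Finset.sum_le_sum fun i hi => ?_
  calc (w / z) ^ N * (x i * z ^ i) ≤ (w / z) ^ i * (x i * z ^ i) :=
        mul_le_mul_of_nonneg_right
          (pow_le_pow_of_le_one (by positivity) (div_le_one_of_le₀ hwz hz.le)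
            (Finset.mem_range.1 hi).le)
          (mul_nonneg (hx i) (pow_nonneg hz.le i))
    _ = x i * w ^ i := by rw [div_pow]; field_simp

lemma sum_range_isBigO_of_eventually_one_sub_mul_tsum_le {x : ℕ → ℝ} (hx : ∀ k, 0 ≤ x k)
    (hχ : ∀ z ∈ Ioo (0 : ℝ) 1, Summable fun i => x i * z ^ i) {C : ℝ}
    (hC : ∀ᶠ z in 𝓝[<] 1, (1 - z) * ∑' i, x i * z ^ i ≤ C) :
    (fun N => ∑ i ∈ range N, x i) =O[atTop] fun N => (N : ℝ) := by
  have hlim : Tendsto (fun N : ℕ => 1 - 1 / (2 * N : ℝ)) atTop (𝓝[<] 1) := by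
    refine tendsto_nhdsWithin_iff.2 ⟨?_, ?_⟩
    · simpa using tendsto_const_nhds.sub
        ((tendsto_const_div_atTop_nhds_zero_nat (1 / 2 : ℝ)).congr fun N => by ring)
    · filter_upwards [eventually_ge_atTop 1] with N hN
      have : (0 : ℝ) < N := by exact_mod_cast hN
      simp only [Set.mem_Iio, sub_lt_self_iff]
      positivity
  refine Asymptotics.IsBigO.of_bound (4 * C) ?_
  filter_upwards [hlim.eventually hC, eventually_ge_atTop 1] with N hN_C hN
  set z : ℝ := 1 - 1 / (2 * N)
  have hN' : (1 : ℝ) ≤ N := by exact_mod_cast hN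
  have hz : z ∈ Ioo (0 : ℝ) 1 := by
    constructor
    · simp only [z, sub_pos]
      rw [div_lt_one (by positivity)]
      linarith
    · simp only [z, sub_lt_self_iff]
      positivity
  have hzN : 1 / 2 ≤ z ^ N := by
    have := one_add_mul_le_pow (a := -(1 / (2 * N) : ℝ))
      (by linarith [show 1 / (2 * N : ℝ) ≤ 1 / 2 by gcongr; linarith]) N
    rw [← sub_eq_add_neg] at this
    refine le_trans (le_of_eq ?_) this
    field_simp
    ring
  have hS0 : 0 ≤ ∑ i ∈ range N, x i := sum_nonneg fun i _ => hx i
  have hS : (∑ i ∈ range N, x i) * z ^ N ≤ ∑' i, x i * z ^ i :=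
    calc (∑ i ∈ range N, x i) * z ^ N ≤ ∑ i ∈ range N, x i * z ^ i := by
          rw [Finset.sum_mul]
          exact sum_le_sum fun i hi => mul_le_mul_of_nonneg_left
            (pow_le_pow_of_le_one hz.1.le hz.2.le (mem_range.1 hi).le) (hx i)
      _ ≤ ∑' i, x i * z ^ i :=
          (hχ z hz).sum_le_tsum _ fun i _ => mul_nonneg (hx i) (pow_nonneg hz.1.le i)
  have h1z : 1 - z = 1 / (2 * N) := by ring
  rw [h1z, div_mul_eq_mul_div, one_mul, div_le_iff₀ (by positivity)] at hN_C
  rw [Real.norm_of_nonneg hS0, Real.norm_natCast]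
  nlinarith [mul_le_mul_of_nonneg_left hzN hS0]

section PowerSeries

variable {s : ℕ → ℝ}

lemma summable_mul_pow (hs : ∀ k, 0 ≤ s k) (hsum : Summable s) {z : ℝ} (hz₀ : 0 ≤ z)
    (hz₁ : z ≤ 1) : Summable fun k => s k * z ^ k :=
  .of_nonneg_of_le (fun k => mul_nonneg (hs k) (pow_nonneg hz₀ k))
    (fun k => mul_le_of_le_one_right (hs k) (pow_le_one₀ hz₀ hz₁)) hsum

lemma tsum_mul_pow_le_tsum (hs : ∀ k, 0 ≤ s k) (hsum : Summable s) {z : ℝ} (hz₀ : 0 ≤ z)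
    (hz₁ : z ≤ 1) : ∑' k, s k * z ^ k ≤ ∑' k, s k :=
  (summable_mul_pow hs hsum hz₀ hz₁).tsum_le_tsum
    (fun k => mul_le_of_le_one_right (hs k) (pow_le_one₀ hz₀ hz₁)) hsum

lemma tsum_sub_mul_one_sub_le_tsum_mul_pow (hs : ∀ k, 0 ≤ s k) (hsum : Summable s)
    (hmom : Summable fun k : ℕ => (k : ℝ) * s k) {z : ℝ} (hz₀ : 0 ≤ z) (hz₁ : z ≤ 1) :
    ∑' k, s k - (∑' k : ℕ, (k : ℝ) * s k) * (1 - z) ≤ ∑' k, s k * z ^ k := by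
  rw [← tsum_mul_right, ← hsum.tsum_sub (hmom.mul_right _)]
  refine (hsum.sub (hmom.mul_right _)).tsum_le_tsum (fun k => ?_) (summable_mul_pow hs hsum hz₀ hz₁)
  have hbernoulli : 1 + k * (z - 1) ≤ z ^ k := by
    simpa using one_add_mul_le_pow (a := z - 1) (by linarith) k
  calc s k - k * s k * (1 - z) = s k * (1 + k * (z - 1)) := by ring
    _ ≤ s k * z ^ k := mul_le_mul_of_nonneg_left hbernoulli (hs k)

lemma hasDerivAt_tsum_mul_pow (hs : ∀ k, 0 ≤ s k) (hmom : Summable fun k : ℕ => (k : ℝ) * s k)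
    {z : ℝ} (hz : z ∈ Ioo (-1 : ℝ) 1) :
    HasDerivAt (fun y => ∑' k, s k * y ^ k) (∑' k, s k * (k * z ^ (k - 1))) z := by
  refine hasDerivAt_tsum_of_isPreconnected hmom isOpen_Ioo isPreconnected_Ioo
    (fun k y _ => (hasDerivAt_pow k y).const_mul (s k)) (fun k y hy => ?_)
    (y₀ := 0) (by norm_num) ?_ hz
  · have hy' : ‖y‖ ^ (k - 1) ≤ 1 := pow_le_one₀ (norm_nonneg _) (abs_le.2 ⟨hy.1.le, hy.2.le⟩)
    rw [norm_mul, norm_mul, Real.norm_of_nonneg (hs k), Real.norm_natCast, norm_pow]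
    nlinarith [mul_le_mul_of_nonneg_left hy' (mul_nonneg (hs k) (Nat.cast_nonneg k))]
  · exact summable_of_ne_finset_zero (s := {0}) fun k hk => by simp_all

lemma tsum_mul_nat_mul_pow_le (hs : ∀ k, 0 ≤ s k) (hmom : Summable fun k : ℕ => (k : ℝ) * s k)
    {z : ℝ} (hz₀ : 0 ≤ z) (hz₁ : z ≤ 1) :
    ∑' k, s k * (k * z ^ (k - 1)) ≤ ∑' k : ℕ, (k : ℝ) * s k := by
  have hle : ∀ k : ℕ, s k * (k * z ^ (k - 1)) ≤ k * s k := fun k => by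
    nlinarith [mul_le_mul_of_nonneg_left (pow_le_one₀ hz₀ hz₁ (n := k - 1))
      (mul_nonneg (hs k) (Nat.cast_nonneg k))]
  exact (Summable.of_nonneg_of_le (fun k => mul_nonneg (hs k) (by positivity)) hle
    hmom).tsum_le_tsum hle hmom

theorem pow_lt_tsum_mul_pow {n : ℕ} (hn : 1 ≤ n) (hs : ∀ k, 0 ≤ s k) (hs0 : 0 < s 0)
    (hsum : Summable s) (hsum1 : ∑' k, s k = 1) (hmom : Summable fun k : ℕ => (k : ℝ) * s k)
    (hγ : ∑' k : ℕ, (k : ℝ) * s k < n)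
    (hderiv : StrictMonoOn (deriv fun z : ℝ => (∑' k, s k * z ^ k) ^ (n : ℝ)⁻¹) (Ioo 0 1))
    {z : ℝ} (hz : z ∈ Ioo (0 : ℝ) 1) : z ^ n < ∑' k, s k * z ^ k := by
  set τ : ℝ → ℝ := fun y => ∑' k, s k * y ^ k
  set f : ℝ → ℝ := fun y => τ y ^ (n : ℝ)⁻¹
  set L : ℝ := (∑' k : ℕ, (k : ℝ) * s k) * (n : ℝ)⁻¹
  have hn' : (0 : ℝ) < n := by exact_mod_cast hn
  have hL : L < 1 := by rwa [mul_inv_lt_iff₀ hn', one_mul]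
  have hτ_pos : ∀ y ∈ Ioo (0 : ℝ) 1, 0 < τ y := fun y hy => hs0.trans_le <| by
    simpa using (summable_mul_pow hs hsum hy.1.le hy.2.le).le_tsum 0
      fun k _ => mul_nonneg (hs k) (pow_nonneg hy.1.le k)
  have hτ_lim : Tendsto τ (𝓝[<] 1) (𝓝 1) :=
    hsum1 ▸ Real.tendsto_tsum_powerSeries_nhdsWithin_lt hsum.tendsto_sum_tsum_nat
  have hrpow_lim (p : ℝ) : Tendsto (fun y => τ y ^ p) (𝓝[<] 1) (𝓝 1) := by
    simpa using hτ_lim.rpow_const (Or.inl one_ne_zero)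
  have hf_deriv : ∀ y ∈ Ioo (0 : ℝ) 1, HasDerivAt f
      ((∑' k, s k * (k * y ^ (k - 1))) * (n : ℝ)⁻¹ * τ y ^ ((n : ℝ)⁻¹ - 1)) y :=
    fun y hy => (hasDerivAt_tsum_mul_pow hs hmom ⟨by linarith [hy.1], hy.2⟩).rpow_const
      (Or.inl (hτ_pos y hy).ne')
  have hderiv_le : ∀ y ∈ Ioo (0 : ℝ) 1, deriv f y ≤ L * τ y ^ ((n : ℝ)⁻¹ - 1) := fun y hy => by
    rw [(hf_deriv y hy).deriv, mul_assoc, mul_assoc]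
    exact mul_le_mul_of_nonneg_right (tsum_mul_nat_mul_pow_le hs hmom hy.1.le hy.2.le)
      (mul_nonneg (inv_nonneg.2 hn'.le) (Real.rpow_nonneg (hτ_pos y hy).le _))
  have hderiv_le_L : ∀ y ∈ Ioo (0 : ℝ) 1, deriv f y ≤ L := fun y hy =>
    hderiv.monotoneOn.le_of_tendsto_nhdsLT hderiv_le
      (by simpa using (hrpow_lim _).const_mul L) hy
  have hf_lower : 1 - f z ≤ L * (1 - z) :=
    sub_le_mul_sub_of_deriv_le_of_tendsto (fun y hy => (hf_deriv y hy).differentiableAt)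
      hderiv_le_L (hrpow_lim _) hz
  have hz_lt : z < f z := by nlinarith [hz.2]
  calc z ^ n < f z ^ n := pow_lt_pow_left₀ hz_lt hz.1.le (by omega)
    _ = τ z := by
      rw [← Real.rpow_natCast, ← Real.rpow_mul (hτ_pos z hz).le, inv_mul_cancel₀ hn'.ne',
        Real.rpow_one]

lemma eventually_mul_one_sub_le_tsum_mul_pow_sub_pow {n : ℕ} (hs : ∀ k, 0 ≤ s k)
    (hsum : Summable s) (hsum1 : ∑' k, s k = 1) (hmom : Summable fun k : ℕ => (k : ℝ) * s k)
    (hγ : ∑' k : ℕ, (k : ℝ) * s k < n) :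
    ∀ᶠ z in 𝓝[<] 1,
      (n - ∑' k : ℕ, (k : ℝ) * s k) / 2 * (1 - z) ≤ ∑' k, s k * z ^ k - z ^ n := by
  set γ := ∑' k : ℕ, (k : ℝ) * s k
  have hgeom : Tendsto (fun z : ℝ => ∑ i ∈ range n, z ^ i) (𝓝[<] 1) (𝓝 n) := by
    simpa using ((continuous_finsetSum (range n) fun i _ => continuous_pow i).tendsto 1).mono_left
      (nhdsWithin_le_nhds (s := Iio (1 : ℝ)))
  filter_upwards [hgeom.eventually (lt_mem_nhds (by linarith : (n + γ) / 2 < n)),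
    Ioo_mem_nhdsLT zero_lt_one] with z hz_geom hz
  have hbernoulli := tsum_sub_mul_one_sub_le_tsum_mul_pow hs hsum hmom hz.1.le hz.2.le
  rw [hsum1] at hbernoulli
  have hz_pow := geom_sum_mul z n
  nlinarith [mul_le_mul_of_nonneg_left hz_geom.le (by linarith [hz.2] : (0 : ℝ) ≤ 1 - z)]

end PowerSeries

section Recurrence

variable {n : ℕ} {s x : ℕ → ℝ}

lemma pow_mul_sum_range_mul_pow_eq
    (hrec : ∀ k, x k = ∑ j ∈ range (k + n + 1), s j * x (k + n - j)) (z : ℝ) (M : ℕ) :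
    z ^ n * ∑ m ∈ range M, x m * z ^ m =
      ∑ m ∈ range M, ∑ j ∈ range (m + n + 1), s j * z ^ j * (x (m + n - j) * z ^ (m + n - j)) := by
  rw [Finset.mul_sum]
  refine Finset.sum_congr rfl fun m _ => ?_
  rw [hrec m, Finset.sum_mul, Finset.mul_sum]
  refine Finset.sum_congr rfl fun j hj => ?_
  have hpow : z ^ n * z ^ m = z ^ j * z ^ (m + n - j) := by
    rw [← pow_add, ← pow_add, Nat.add_sub_cancel' (Nat.lt_succ_iff.1 (Finset.mem_range.1 hj)),
      add_comm]
  linear_combination (s j * x (m + n - j)) * hpow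

lemma sum_mul_pow_mul_sum_Ico_le (hs : ∀ k, 0 ≤ s k) (hx : ∀ k, 0 ≤ x k)
    (hrec : ∀ k, x k = ∑ j ∈ range (k + n + 1), s j * x (k + n - j)) {z : ℝ} (hz : 0 ≤ z)
    (J K : ℕ) :
    (∑ j ∈ range J, s j * z ^ j) * ∑ i ∈ Finset.Ico n (n + K), x i * z ^ i ≤
      z ^ n * ∑ m ∈ range (K + J), x m * z ^ m := by
  set F : (Σ _ : ℕ, ℕ) → ℝ := fun p => s p.2 * z ^ p.2 * (x (p.1 + n - p.2) * z ^ (p.1 + n - p.2))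
  -- the product of the `j`-th and the `i`-th terms is the `j`-th term of the recurrence for
  -- `x (i + j - n)`, multiplied by `z ^ (i + j)`
  set e : ℕ × ℕ → Σ _ : ℕ, ℕ := fun p => ⟨p.2 + p.1 - n, p.1⟩
  have he : ∀ p ∈ range J ×ˢ Finset.Ico n (n + K),
      F (e p) = s p.1 * z ^ p.1 * (x p.2 * z ^ p.2) := by
    rintro ⟨j, i⟩ hp
    have hi : n ≤ i := (Finset.mem_Ico.1 (Finset.mem_product.1 hp).2).1
    have hidx : i + j - n + n - j = i := by omega
    simp only [F, e, hidx]
  have he_inj : Set.InjOn e ↑(range J ×ˢ Finset.Ico n (n + K)) := by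
    rintro ⟨j, i⟩ hp ⟨j', i'⟩ hp' h
    simp only [Finset.coe_product, Set.mem_prod, Finset.mem_coe, Finset.mem_Ico] at hp hp'
    simp only [e, Sigma.mk.injEq, heq_eq_eq] at h
    ext <;> simp only <;> omega
  rw [pow_mul_sum_range_mul_pow_eq hrec, Finset.sum_sigma', Finset.sum_mul_sum,
    ← Finset.sum_product', ← Finset.sum_congr rfl he, ← Finset.sum_image he_inj]
  refine Finset.sum_le_sum_of_subset_of_nonneg ?_ fun p _ _ =>
    mul_nonneg (mul_nonneg (hs _) (pow_nonneg hz _)) (mul_nonneg (hx _) (pow_nonneg hz _))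
  simp only [Finset.subset_iff, Finset.mem_image, Finset.mem_product, Finset.mem_range,
    Finset.mem_Ico, Finset.mem_sigma]
  rintro _ ⟨⟨j, i⟩, ⟨hj, hi⟩, rfl⟩
  simp only [e]
  omega

lemma summable_mul_pow_of_pow_lt (hs : ∀ k, 0 ≤ s k) (hx : ∀ k, 0 ≤ x k)
    (hrec : ∀ k, x k = ∑ j ∈ range (k + n + 1), s j * x (k + n - j)) {z : ℝ} (hz : 0 ≤ z)
    (h : z ^ n < ∑ j ∈ range n, s j * z ^ j) : Summable fun i => x i * z ^ i := by
  set T := ∑ j ∈ range n, s j * z ^ j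
  set c := ∑ i ∈ range n, x i * z ^ i
  have hterm : ∀ i, 0 ≤ x i * z ^ i := fun i => mul_nonneg (hx i) (pow_nonneg hz i)
  have hbound : ∀ K, ∑ i ∈ range (n + K), x i * z ^ i ≤ T * c / (T - z ^ n) := fun K => by
    have hkey := sum_mul_pow_mul_sum_Ico_le hs hx hrec hz n K
    rw [Finset.sum_Ico_eq_sub _ (by omega), add_comm K n] at hkey
    rw [le_div_iff₀ (by linarith)]
    linarith
  refine summable_of_sum_range_le hterm fun N => le_trans ?_ (hbound N)
  exact Finset.sum_le_sum_of_subset_of_nonneg (range_subset_range.2 (by omega))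
    fun i _ _ => hterm i

lemma not_summable_mul_pow_of_lt (hs : ∀ k, 0 ≤ s k) (hx : ∀ k, 0 ≤ x k)
    (hrec : ∀ k, x k = ∑ j ∈ range (k + n + 1), s j * x (k + n - j)) {d : ℕ} {z w : ℝ}
    (hw : 0 < w) (hwz : w ≤ z) (hT : z ^ (n + d) < (∑ j ∈ range (n + d), s j * z ^ j) * w ^ d)
    (hz : ¬Summable fun i => x i * z ^ i) : ¬Summable fun i => x i * w ^ i := by
  have hz0 : 0 < z := hw.trans_le hwz
  set T := ∑ j ∈ range (n + d), s j * z ^ j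
  set t := T / z ^ n
  set r := w / z
  have hr0 : 0 < r := div_pos hw hz0
  have htr : 1 < t * r ^ d := by
    rw [div_pow, div_mul_div_comm, one_lt_div (by positivity), ← pow_add]
    exact hT
  have ht : 1 < t := htr.trans_le <| mul_le_of_le_one_right
    (div_nonneg (sum_nonneg fun j _ => mul_nonneg (hs j) (pow_nonneg hz0.le j)) (by positivity))
    (pow_le_one₀ hr0.le (div_le_one_of_le₀ hwz hz0.le))
  set Y : ℕ → ℝ := fun K => ∑ i ∈ range (n + K), x i * z ^ i
  have hY : Tendsto Y atTop atTop :=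
    ((not_summable_iff_tendsto_nat_atTop_of_nonneg fun i =>
      mul_nonneg (hx i) (pow_nonneg hz0.le i)).1 hz).comp
      (tendsto_atTop_mono (fun K => Nat.le_add_left K n) tendsto_id)
  have hstep : ∀ K, t * (Y K - ∑ i ∈ range n, x i * z ^ i) ≤ Y (K + d) := fun K => by
    have hkey := sum_mul_pow_mul_sum_Ico_le hs hx hrec hz0.le (n + d) K
    rw [Finset.sum_Ico_eq_sub _ (by omega), show K + (n + d) = n + (K + d) by ring] at hkey
    rw [div_mul_eq_mul_div, div_le_iff₀ (by positivity)]
    linarith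
  obtain ⟨K₀, a, ha, hgrow⟩ := exists_pow_mul_le_of_mul_sub_le ht
    (sum_nonneg fun i _ => mul_nonneg (hx i) (pow_nonneg hz0.le i)) hY hstep
  intro hw_sum
  have hbound : ∀ l : ℕ, r ^ (n + K₀) * a * (t * r ^ d) ^ l ≤ ∑' i, x i * w ^ i := fun l =>
    calc r ^ (n + K₀) * a * (t * r ^ d) ^ l = r ^ (n + (K₀ + l * d)) * (t ^ l * a) := by ring
      _ ≤ r ^ (n + (K₀ + l * d)) * Y (K₀ + l * d) :=
        mul_le_mul_of_nonneg_left (hgrow l) (by positivity)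
      _ ≤ ∑ i ∈ range (n + (K₀ + l * d)), x i * w ^ i := div_pow_mul_sum_range_le hx hw hwz _
      _ ≤ ∑' i, x i * w ^ i :=
        hw_sum.sum_le_tsum _ fun i _ => mul_nonneg (hx i) (pow_nonneg hw.le i)
  obtain ⟨l, hl⟩ := (((tendsto_pow_atTop_atTop_of_one_lt htr).const_mul_atTop
    (by positivity : 0 < r ^ (n + K₀) * a)).eventually_gt_atTop (∑' i, x i * w ^ i)).exists
  linarith [hbound l]

theorem summable_mul_pow_of_lt_one (hn : 1 ≤ n) (hs : ∀ k, 0 ≤ s k) (hs0 : 0 < s 0)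
    (hsum : Summable s) (hx : ∀ k, 0 ≤ x k)
    (hrec : ∀ k, x k = ∑ j ∈ range (k + n + 1), s j * x (k + n - j))
    (hτ : ∀ z ∈ Ioo (0 : ℝ) 1, z ^ n < ∑' k, s k * z ^ k) {z : ℝ} (hz : z ∈ Ioo (0 : ℝ) 1) :
    Summable fun i => x i * z ^ i := by
  by_contra hz_bad
  set U := {y ∈ Ioo (0 : ℝ) 1 | ¬Summable fun i => x i * y ^ i}
  have hU_lb : ∀ y ∈ U, s 0 ≤ y := by
    rintro y ⟨hy, hy_bad⟩
    by_contra! hlt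
    refine hy_bad (summable_mul_pow_of_pow_lt hs hx hrec hy.1.le ?_)
    calc y ^ n ≤ y := pow_le_of_le_one hy.1.le hy.2.le (by omega)
      _ < s 0 * y ^ 0 := by simpa using hlt
      _ ≤ ∑ j ∈ range n, s j * y ^ j :=
        single_le_sum (fun j _ => mul_nonneg (hs j) (pow_nonneg hy.1.le j))
          (mem_range.2 (by omega))
  have hU_bdd : BddBelow U := ⟨s 0, hU_lb⟩
  have hU_ne : U.Nonempty := ⟨z, hz, hz_bad⟩
  set ζ := sInf U
  have hζ : ζ ∈ Ioo (0 : ℝ) 1 :=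
    ⟨hs0.trans_le (le_csInf hU_ne hU_lb), (csInf_le hU_bdd ⟨hz, hz_bad⟩).trans_lt hz.2⟩
  obtain ⟨d, hd⟩ : ∃ d, ζ ^ n < ∑ j ∈ range (n + d), s j * ζ ^ j :=
    (((summable_mul_pow hs hsum hζ.1.le hζ.2.le).tendsto_sum_tsum_nat.comp
      (tendsto_atTop_mono (fun d => Nat.le_add_left d n) tendsto_id)).eventually
      (lt_mem_nhds (hτ ζ hζ))).exists
  set P := ∑ j ∈ range (n + d), s j * ζ ^ j
  -- divergence at the points of `U` close to `ζ` will propagate down to some `w < ζ`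
  obtain ⟨w, ⟨hw0, hwζ⟩, hwP⟩ : ∃ w ∈ Ioo 0 ζ, ζ ^ (n + d) < P * w ^ d := by
    have hζP : ζ ^ (n + d) < P * ζ ^ d := by
      rw [pow_add]
      exact mul_lt_mul_of_pos_right hd (pow_pos hζ.1 d)
    have hcont : Tendsto (fun w => P * w ^ d) (𝓝[<] ζ) (𝓝 (P * ζ ^ d)) :=
      ((continuous_const.mul (continuous_pow d)).tendsto ζ).mono_left nhdsWithin_le_nhds
    exact ((eventually_mem_set.2 (Ioo_mem_nhdsLT hζ.1)).and
      (hcont.eventually (lt_mem_nhds hζP))).exists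
  obtain ⟨y, hy_pow, hyU⟩ : ({y : ℝ | y ^ (n + d) < P * w ^ d} ∩ U).Nonempty :=
    mem_closure_iff.1 (csInf_mem_closure hU_ne hU_bdd) _
      (isOpen_lt (continuous_pow _) continuous_const) hwP
  have hζy : ζ ≤ y := csInf_le hU_bdd hyU
  have hPy : P ≤ ∑ j ∈ range (n + d), s j * y ^ j := sum_le_sum fun j _ =>
    mul_le_mul_of_nonneg_left (pow_le_pow_left₀ hζ.1.le hζy j) (hs j)
  have hw_bad := not_summable_mul_pow_of_lt hs hx hrec hw0 (hwζ.le.trans hζy)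
    (hy_pow.trans_le (mul_le_mul_of_nonneg_right hPy (pow_nonneg hw0.le d))) hyU.2
  exact (csInf_le hU_bdd ⟨⟨hw0, hwζ.trans hζ.2⟩, hw_bad⟩).not_gt hwζ

lemma tsum_mul_pow_sub_pow_mul_tsum_le (hs : ∀ k, 0 ≤ s k) (hx : ∀ k, 0 ≤ x k)
    (hrec : ∀ k, x k = ∑ j ∈ range (k + n + 1), s j * x (k + n - j)) {z : ℝ} (hz : 0 ≤ z)
    (hτ : Summable fun k => s k * z ^ k) (hχ : Summable fun i => x i * z ^ i) :
    (∑' k, s k * z ^ k - z ^ n) * ∑' i, x i * z ^ i ≤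
      (∑' k, s k * z ^ k) * ∑ i ∈ range n, x i * z ^ i := by
  set χ := ∑' i, x i * z ^ i
  set c := ∑ i ∈ range n, x i * z ^ i
  have hJ : ∀ J, (∑ j ∈ range J, s j * z ^ j) * (χ - c) ≤ z ^ n * χ := fun J => by
    have hlim : Tendsto (fun K => (∑ j ∈ range J, s j * z ^ j) *
        ∑ i ∈ Finset.Ico n (n + K), x i * z ^ i) atTop
        (𝓝 ((∑ j ∈ range J, s j * z ^ j) * (χ - c))) := by
      simp_rw [Finset.sum_Ico_eq_sub _ (Nat.le_add_right n _)]
      exact ((hχ.tendsto_sum_tsum_nat.comp (tendsto_atTop_mono (fun K => Nat.le_add_left K n)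
        tendsto_id)).sub_const c).const_mul _
    refine le_of_tendsto' hlim fun K => (sum_mul_pow_mul_sum_Ico_le hs hx hrec hz J K).trans ?_
    exact mul_le_mul_of_nonneg_left
      (hχ.sum_le_tsum _ fun i _ => mul_nonneg (hx i) (pow_nonneg hz i)) (pow_nonneg hz n)
  have := le_of_tendsto' (hτ.tendsto_sum_tsum_nat.mul_const (χ - c)) hJ
  linarith

lemma eventually_one_sub_mul_tsum_mul_pow_le (hs : ∀ k, 0 ≤ s k) (hsum : Summable s)
    (hsum1 : ∑' k, s k = 1) (hmom : Summable fun k : ℕ => (k : ℝ) * s k)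
    (hγ : ∑' k : ℕ, (k : ℝ) * s k < n) (hx : ∀ k, 0 ≤ x k)
    (hrec : ∀ k, x k = ∑ j ∈ range (k + n + 1), s j * x (k + n - j))
    (hχ : ∀ z ∈ Ioo (0 : ℝ) 1, Summable fun i => x i * z ^ i) :
    ∀ᶠ z in 𝓝[<] 1, (1 - z) * ∑' i, x i * z ^ i ≤
      2 * (∑ i ∈ range n, x i) / (n - ∑' k : ℕ, (k : ℝ) * s k) := by
  filter_upwards [eventually_mul_one_sub_le_tsum_mul_pow_sub_pow hs hsum hsum1 hmom hγ,
    Ioo_mem_nhdsLT zero_lt_one] with z hz_gap hz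
  have hτ := summable_mul_pow hs hsum hz.1.le hz.2.le
  have hτ_le : ∑' k, s k * z ^ k ≤ 1 := hsum1 ▸ tsum_mul_pow_le_tsum hs hsum hz.1.le hz.2.le
  have hc_le : ∑ i ∈ range n, x i * z ^ i ≤ ∑ i ∈ range n, x i := sum_le_sum fun i _ =>
    mul_le_of_le_one_right (hx i) (pow_le_one₀ hz.1.le hz.2.le)
  have hc0 : 0 ≤ ∑ i ∈ range n, x i * z ^ i :=
    sum_nonneg fun i _ => mul_nonneg (hx i) (pow_nonneg hz.1.le i)
  have hχ0 : 0 ≤ ∑' i, x i * z ^ i := tsum_nonneg fun i => mul_nonneg (hx i) (pow_nonneg hz.1.le i)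
  have hmain := tsum_mul_pow_sub_pow_mul_tsum_le hs hx hrec hz.1.le hτ (hχ z hz)
  rw [le_div_iff₀ (by linarith)]
  nlinarith [mul_le_mul_of_nonneg_right hz_gap hχ0, mul_le_mul_of_nonneg_right hτ_le hc0]

end Recurrence

section Records

variable {n : ℕ} {s x : ℕ → ℝ}

lemma exists_record_mem_Ioc (hn : 1 ≤ n) (hs : ∀ k, 0 ≤ s k) (hs0 : 0 < s 0) (hsum : Summable s)
    (hsum1 : ∑' k, s k = 1) (hx : ∀ k, 0 ≤ x k)
    (hrec : ∀ k, x k = ∑ j ∈ range (k + n + 1), s j * x (k + n - j)) {k : ℕ}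
    (hk : ∀ i ≤ k, x i ≤ x k) : ∃ k' ∈ Finset.Ioc k (k + n), ∀ i ≤ k', x i ≤ x k' := by
  obtain ⟨k', hk', hmax⟩ := exists_max_image (Finset.Ioc k (k + n)) x (nonempty_Ioc.2 (by omega))
  have hk'_mem := Finset.mem_Ioc.1 hk'
  set β := ∑ j ∈ range n, s j
  have hβ : 0 < β := hs0.trans_le (single_le_sum (fun j _ => hs j) (mem_range.2 (by omega)))
  have hmass : β + ∑ j ∈ Finset.Ico n (k + n + 1), s j ≤ 1 := by
    rw [sum_range_add_sum_Ico _ (by omega), ← hsum1]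
    exact hsum.sum_le_tsum _ fun j _ => hs j
  have hnear : ∑ j ∈ range n, s j * x (k + n - j) ≤ β * x k' := by
    rw [sum_mul]
    exact sum_le_sum fun j hj => mul_le_mul_of_nonneg_left
      (hmax _ (Finset.mem_Ioc.2 (by rw [Finset.mem_range] at hj; omega))) (hs j)
  have hfar : ∑ j ∈ Finset.Ico n (k + n + 1), s j * x (k + n - j) ≤ (1 - β) * x k :=
    calc _ ≤ ∑ j ∈ Finset.Ico n (k + n + 1), s j * x k := sum_le_sum fun j hj =>
          mul_le_mul_of_nonneg_left (hk _ (by rw [Finset.mem_Ico] at hj; omega)) (hs j)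
      _ ≤ (1 - β) * x k := by
          rw [← sum_mul]
          exact mul_le_mul_of_nonneg_right (by linarith) (hx k)
  have hsplit := hrec k
  rw [← sum_range_add_sum_Ico _ (by omega : n ≤ k + n + 1)] at hsplit
  have hk_le : x k ≤ x k' := le_of_mul_le_mul_left (by linarith) hβ
  refine ⟨k', hk', fun i hi => ?_⟩
  rcases le_or_gt i k with hik | hik
  · exact (hk i hik).trans hk_le
  · exact hmax i (Finset.mem_Ioc.2 ⟨hik, by omega⟩)

lemma exists_record_mem_Ico (hn : 1 ≤ n) (hs : ∀ k, 0 ≤ s k) (hs0 : 0 < s 0) (hsum : Summable s)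
    (hsum1 : ∑' k, s k = 1) (hx : ∀ k, 0 ≤ x k)
    (hrec : ∀ k, x k = ∑ j ∈ range (k + n + 1), s j * x (k + n - j)) (m : ℕ) :
    ∃ r ∈ Finset.Ico m (m + n), ∀ i ≤ r, x i ≤ x r := by
  induction m with
  | zero => exact ⟨0, Finset.mem_Ico.2 ⟨le_rfl, by omega⟩, fun i hi => by rw [Nat.le_zero.1 hi]⟩
  | succ m ih =>
    obtain ⟨r, hr, hr_rec⟩ := ih
    rw [Finset.mem_Ico] at hr
    rcases eq_or_lt_of_le hr.1 with rfl | hlt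
    · obtain ⟨k', hk', hk'_rec⟩ :=
        exists_record_mem_Ioc hn hs hs0 hsum hsum1 hx hrec hr_rec
      exact ⟨k', Finset.mem_Ico.2 (by rw [Finset.mem_Ioc] at hk'; omega), hk'_rec⟩
    · exact ⟨r, Finset.mem_Ico.2 (by omega), hr_rec⟩

lemma nat_mul_le_sum_range (hn : 1 ≤ n) (hs : ∀ k, 0 ≤ s k) (hs0 : 0 < s 0) (hsum : Summable s)
    (hsum1 : ∑' k, s k = 1) (hx : ∀ k, 0 ≤ x k)
    (hrec : ∀ k, x k = ∑ j ∈ range (k + n + 1), s j * x (k + n - j)) (k L : ℕ) :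
    L * x k ≤ ∑ i ∈ range (k + L * n), x i := by
  induction L with
  | zero => simpa using sum_nonneg fun i _ => hx i
  | succ L ih =>
    obtain ⟨r, hr, hr_rec⟩ :=
      exists_record_mem_Ico hn hs hs0 hsum hsum1 hx hrec (k + L * n)
    have hkr : x k ≤ x r := hr_rec k (by rw [Finset.mem_Ico] at hr; omega)
    rw [show k + (L + 1) * n = k + L * n + n by ring,
      ← sum_range_add_sum_Ico _ (Nat.le_add_right _ n)]
    push_cast
    linarith [single_le_sum (fun i _ => hx i) hr]

lemma exists_forall_le_of_isBigO (hn : 1 ≤ n) (hs : ∀ k, 0 ≤ s k) (hs0 : 0 < s 0)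
    (hsum : Summable s) (hsum1 : ∑' k, s k = 1) (hx : ∀ k, 0 ≤ x k)
    (hrec : ∀ k, x k = ∑ j ∈ range (k + n + 1), s j * x (k + n - j))
    (hO : (fun N => ∑ i ∈ range N, x i) =O[atTop] fun N => (N : ℝ)) : ∃ B, ∀ k, x k ≤ B := by
  obtain ⟨C, hC0, hC⟩ := hO.exists_pos
  obtain ⟨N₀, hN₀⟩ := eventually_atTop.1 hC.bound
  refine ⟨C * (1 + n), fun k => ?_⟩
  set L := k + N₀ + 1
  have hsum_le := hN₀ (k + L * n) (by have := Nat.le_mul_of_pos_right L hn; omega)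
  rw [Real.norm_of_nonneg (sum_nonneg fun i _ => hx i), Real.norm_natCast] at hsum_le
  have hL : (0 : ℝ) < L := by positivity
  have hkL : (k : ℝ) ≤ L := by simp only [L]; push_cast; linarith
  have := nat_mul_le_sum_range hn hs hs0 hsum hsum1 hx hrec k L
  push_cast at hsum_le
  refine le_of_mul_le_mul_left ?_ hL
  nlinarith

end Records

/-- Theorem 2 (ii), boundedness: if `τ(1) = 1` and `τ'(1) < n` (and the derivative of
`τ(z)^{1/n}` is increasing), every positive solution of `x = T x` has finite `limsup`. -/
theorem stmt13 (n : ℕ) (hn : 1 ≤ n) (t : ℤ → ℝ)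
    (ht : ∀ j : ℤ, -(n : ℤ) ≤ j → 0 ≤ t j) (htn : 0 < t (-(n : ℤ)))
    (hsum : Summable fun k : ℕ => t ((k : ℤ) - n))
    (hsum1 : (∑' k : ℕ, t ((k : ℤ) - n)) = 1)
    (hmom : Summable fun k : ℕ => (k : ℝ) * t ((k : ℤ) - n))
    (hγ : (∑' k : ℕ, (k : ℝ) * t ((k : ℤ) - n)) < n)
    (hderiv : StrictMonoOn
      (deriv fun z : ℝ => (∑' k : ℕ, t ((k : ℤ) - n) * z ^ k) ^ ((n : ℝ)⁻¹)) (Set.Ioo 0 1))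
    (x : ℕ → ℝ) (hxpos : ∀ k, 0 < x k)
    (hrec : ∀ k : ℕ, x k = ∑ j ∈ Finset.range (k + n + 1), t ((j : ℤ) - n) * x (k + n - j)) :
    Filter.limsup (fun k => ((x k : ℝ) : EReal)) atTop < ⊤ := by
  have hs : ∀ k : ℕ, 0 ≤ t ((k : ℤ) - n) := fun k => ht _ (by omega)
  have hs0 : 0 < t (((0 : ℕ) : ℤ) - n) := by simpa using htn
  have hx : ∀ k, 0 ≤ x k := fun k => (hxpos k).le
  have hχ : ∀ z ∈ Ioo (0 : ℝ) 1, Summable fun i => x i * z ^ i :=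
    fun z => summable_mul_pow_of_lt_one hn hs hs0 hsum hx hrec
      fun y => pow_lt_tsum_mul_pow hn hs hs0 hsum hsum1 hmom hγ hderiv
  obtain ⟨B, hB⟩ := exists_forall_le_of_isBigO hn hs hs0 hsum hsum1 hx hrec <|
    sum_range_isBigO_of_eventually_one_sub_mul_tsum_le hx hχ <|
      eventually_one_sub_mul_tsum_mul_pow_le hs hsum hsum1 hmom hγ hx hrec hχ
  calc limsup (fun k => ((x k : ℝ) : EReal)) atTop ≤ B :=
        limsup_le_of_le (by isBoundedDefault) (.of_forall fun k => EReal.coe_le_coe_iff.2 (hB k))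
    _ < ⊤ := EReal.coe_lt_top B
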